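/- Let n = 3m + s with m ≥ 1, s ≥ 0, and let E be the totally antisymmetric third-order tensor on ℝⁿ with E^{abc} = ε^{abc} (the sign of the permutation) whenever some rearrangement of (a,b,c) equals (i, m+i, 2m+i) for some i ∈ {1,…,m}, and E^{abc} = 0 otherwise. Suppose G : ℝⁿ → ℝ has the split form G(y) = Σ_{i=1}^m G^i(y^i, y^{m+i}, y^{2m+i}, y^{3m+1}, …, y^n), where each G^i is smooth and depends only on the i-th canonical triplet of coordinates and on the Casimir coordinates y^{3m+1},…,y^n. Then the skew-symmetric matrix field 𝒥_G^{ac} := Σ_b E^{abc} ∂_bG satisfies the Jacobi identity Σ_μ (𝒥_G^{aμ} ∂_μ𝒥_G^{cd} + 𝒥_G^{cμ} ∂_μ𝒥_G^{da} + 𝒥_G^{dμ} ∂_μ𝒥_G^{ac}) = 0 on ℝⁿ for all a,c,d ∈ {1,…,n}. -/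

import Mathlib

/-- Partial derivative in the `i`-th coordinate direction. -/
noncomputable def pd {n : ℕ} (i : Fin n) (f : (Fin n → ℝ) → ℝ) (x : Fin n → ℝ) : ℝ :=
  fderiv ℝ f x (Pi.single i 1)

/-- The generalized Levi-Civita symbol `E` on `ℝ^(3m+s)`: totally antisymmetric, supported
on the canonical triplets `(i, m+i, 2m+i)`, `i = 0,…,m-1` (0-based), equal to the sign of
the permutation on each triplet and `0` otherwise.  An index triple `(a,b,c)` is a
rearrangement of a canonical triplet iff all three indices are `< 3m` and have the same
residue mod `m`; its `levels` `a/m, b/m, c/m ∈ {0,1,2}` then determine the sign via the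
polynomial formula (which vanishes when two indices coincide). -/
noncomputable def Egen (m s : ℕ) (a b c : Fin (3 * m + s)) : ℝ :=
  if a.val < 3 * m ∧ b.val < 3 * m ∧ c.val < 3 * m
      ∧ a.val % m = b.val % m ∧ b.val % m = c.val % m then
    (((b.val / m : ℕ) : ℝ) - ((a.val / m : ℕ) : ℝ))
      * (((c.val / m : ℕ) : ℝ) - ((a.val / m : ℕ) : ℝ))
      * (((c.val / m : ℕ) : ℝ) - ((b.val / m : ℕ) : ℝ)) / 2
  else 0

set_option maxHeartbeats 1000000

noncomputable def eps (a b c : Fin 3) : ℝ :=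
  ((b.val : ℝ) - (a.val : ℝ)) * ((c.val : ℝ) - (a.val : ℝ)) * ((c.val : ℝ) - (b.val : ℝ)) / 2

lemma fin3cases (l : Fin 3) : l = 0 ∨ l = 1 ∨ l = 2 := by fin_cases l <;> simp

lemma key (g : Fin 3 → ℝ) (H : Fin 3 → Fin 3 → ℝ)
    (h10 : H 1 0 = H 0 1) (h20 : H 2 0 = H 0 2) (h21 : H 2 1 = H 1 2)
    (la lc ld : Fin 3) :
    ∑ lμ, ((∑ lb, eps la lb lμ * g lb) * (∑ le, eps lc le ld * H lμ le)
      + (∑ lb, eps lc lb lμ * g lb) * (∑ le, eps ld le la * H lμ le)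
      + (∑ lb, eps ld lb lμ * g lb) * (∑ le, eps la le lc * H lμ le)) = 0 := by
  rcases fin3cases la with h1|h1|h1 <;> rcases fin3cases lc with h2|h2|h2 <;>
    rcases fin3cases ld with h3|h3|h3 <;> subst h1 h2 h3 <;>
    simp only [Fin.sum_univ_three] <;> norm_num [eps] <;>
    simp only [h10, h20, h21] <;> ring_nf

section helpers

lemma nmod_helper {m : ℕ} (l i : ℕ) (h : i < m) : (m * l + i) % m = i := by
  rw [Nat.mul_add_mod, Nat.mod_eq_of_lt h]

lemma ndiv_helper {m : ℕ} (l i : ℕ) (h : i < m) : (m * l + i) / m = l := by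
  rw [Nat.mul_add_div (by omega), Nat.div_eq_of_lt h, Nat.add_zero]

lemma idx_lt {m : ℕ} (l : Fin 3) (i : Fin m) : m * l.val + i.val < 3 * m := by
  have h2 : m * l.val ≤ m * 2 := Nat.mul_le_mul_left m (by omega)
  have h3 := i.isLt
  linarith

lemma Egen_support {m s : ℕ} {a b c : Fin (3 * m + s)} (h : Egen m s a b c ≠ 0) :
    a.val < 3 * m ∧ b.val < 3 * m ∧ c.val < 3 * m
      ∧ a.val % m = b.val % m ∧ b.val % m = c.val % m := by
  by_contra hc
  exact h (by rw [Egen, if_neg hc])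

lemma Egen_eq_eps {m s : ℕ} {i : Fin m} {a b c : Fin (3 * m + s)} {l1 l2 l3 : Fin 3}
    (ha : a.val = m * l1.val + i.val) (hb : b.val = m * l2.val + i.val)
    (hc : c.val = m * l3.val + i.val) :
    Egen m s a b c = eps l1 l2 l3 := by
  have hi := i.isLt
  have hma : a.val % m = i.val := by rw [ha, nmod_helper _ _ hi]
  have hmb : b.val % m = i.val := by rw [hb, nmod_helper _ _ hi]
  have hmc : c.val % m = i.val := by rw [hc, nmod_helper _ _ hi]
  have hda : a.val / m = l1.val := by rw [ha, ndiv_helper _ _ hi]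
  have hdb : b.val / m = l2.val := by rw [hb, ndiv_helper _ _ hi]
  have hdc : c.val / m = l3.val := by rw [hc, ndiv_helper _ _ hi]
  rw [Egen, if_pos ⟨ha ▸ idx_lt l1 i, hb ▸ idx_lt l2 i, hc ▸ idx_lt l3 i,
    by rw [hma, hmb], by rw [hmb, hmc]⟩, eps, hda, hdb, hdc]

lemma sum_reduce {n : ℕ} (emb : Fin 3 → Fin n) (hinj : Function.Injective emb)
    (F : Fin n → ℝ) (hF : ∀ μ, (∀ l, μ ≠ emb l) → F μ = 0) :
    ∑ μ, F μ = ∑ l, F (emb l) := by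
  have h1 : ∑ l, F (emb l) = ∑ μ ∈ Finset.univ.image emb, F μ :=
    (Finset.sum_image (fun x _ y _ h => hinj h)).symm
  rw [h1]
  exact (Finset.sum_subset (Finset.subset_univ _) (fun y _ hy =>
    hF y fun l hl => hy (hl ▸ Finset.mem_image_of_mem emb (Finset.mem_univ l)))).symm

end helpers

noncomputable def Pl (m s : ℕ) (i : Fin m) :
    ((Fin (3 * m + s) → ℝ)) →L[ℝ] ((Fin (3 * m + s) → ℝ)) :=
  ContinuousLinearMap.pi fun j =>
    if (j.val < 3 * m ∧ j.val % m = i.val) ∨ 3 * m ≤ j.val then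
      ContinuousLinearMap.proj j else 0

lemma Pl_apply {m s : ℕ} (i : Fin m) (y : Fin (3 * m + s) → ℝ) (j : Fin (3 * m + s)) :
    Pl m s i y j
      = if (j.val < 3 * m ∧ j.val % m = i.val) ∨ 3 * m ≤ j.val then y j else 0 := by
  rw [Pl, ContinuousLinearMap.pi_apply]
  split_ifs <;> simp

lemma Pl_single {m s : ℕ} (i : Fin m) (b : Fin (3 * m + s)) :
    Pl m s i (Pi.single b 1)
      = if (b.val < 3 * m ∧ b.val % m = i.val) ∨ 3 * m ≤ b.val then Pi.single b 1 else 0 := by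
  funext j
  rw [Pl_apply, ite_apply]
  by_cases hj : j = b
  · subst hj; simp
  · simp [Pi.single_eq_of_ne hj]


/-- If the Hamiltonian `G` splits as a sum `G = Σᵢ Gⁱ`, where each `Gⁱ` depends only on the
`i`-th canonical triplet of coordinates `(yⁱ, y^{m+i}, y^{2m+i})` and on the Casimir
coordinates `y^{3m+1},…,yⁿ`, then the matrix field `𝒥_G^{ac} = Σ_b E^{abc} ∂_bG` satisfies
the Jacobi identity on all of `ℝⁿ`, `n = 3m+s`. -/
theorem split_hamiltonian_gives_poisson (m s : ℕ) (hm : 1 ≤ m)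
    (Gi : Fin m → ((Fin (3 * m + s) → ℝ) → ℝ))
    (hGiSmooth : ∀ i, ContDiff ℝ (⊤ : ℕ∞) (Gi i))
    (hGiDep : ∀ (i : Fin m) (y z : Fin (3 * m + s) → ℝ),
      y ⟨i.val, by have := i.isLt; omega⟩ = z ⟨i.val, by have := i.isLt; omega⟩ →
      y ⟨m + i.val, by have := i.isLt; omega⟩ = z ⟨m + i.val, by have := i.isLt; omega⟩ →
      y ⟨2 * m + i.val, by have := i.isLt; omega⟩ = z ⟨2 * m + i.val, by have := i.isLt; omega⟩ →
      (∀ j : Fin (3 * m + s), 3 * m ≤ j.val → y j = z j) →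
      Gi i y = Gi i z)
    (G : (Fin (3 * m + s) → ℝ) → ℝ) (hG : G = fun y => ∑ i, Gi i y) :
    ∀ (x : Fin (3 * m + s) → ℝ) (a c d : Fin (3 * m + s)),
      ∑ μ, ((∑ b, Egen m s a b μ * pd b G x)
              * pd μ (fun y => ∑ b, Egen m s c b d * pd b G y) x
          + (∑ b, Egen m s c b μ * pd b G x)
              * pd μ (fun y => ∑ b, Egen m s d b a * pd b G y) x
          + (∑ b, Egen m s d b μ * pd b G x)
              * pd μ (fun y => ∑ b, Egen m s a b c * pd b G y) x) = 0 := by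
  have hGsmooth : ContDiff ℝ (⊤ : ℕ∞) G := by
    rw [hG]; exact ContDiff.sum fun i _ => hGiSmooth i
  have hGiProj : ∀ (i : Fin m) (y), Gi i (Pl m s i y) = Gi i y := by
    intro i y
    have hi := i.isLt
    refine hGiDep i (Pl m s i y) y ?_ ?_ ?_ ?_
    · rw [Pl_apply, if_pos (Or.inl ⟨show i.val < 3 * m by omega,
        show i.val % m = i.val from Nat.mod_eq_of_lt hi⟩)]
    · rw [Pl_apply, if_pos (Or.inl ⟨show m + i.val < 3 * m by omega,
        show (m + i.val) % m = i.val by rw [Nat.add_mod_left, Nat.mod_eq_of_lt hi]⟩)]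
    · rw [Pl_apply, if_pos (Or.inl ⟨show 2 * m + i.val < 3 * m by omega,
        show (2 * m + i.val) % m = i.val by
          rw [show 2 * m + i.val = m * 2 + i.val by ring, nmod_helper _ _ hi]⟩)]
    · intro j hj
      rw [Pl_apply, if_pos (Or.inr hj)]
  have hpdGi : ∀ (i : Fin m) (e : Fin (3 * m + s)) (y), pd e (Gi i) y
      = fderiv ℝ (Gi i) (Pl m s i y) (Pl m s i (Pi.single e 1)) := by
    intro i e y
    have hcomp : Gi i = fun z => Gi i (Pl m s i z) := funext fun z => (hGiProj i z).symm
    have h1 : HasFDerivAt (fun z => Gi i (Pl m s i z))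
        ((fderiv ℝ (Gi i) (Pl m s i y)).comp (Pl m s i)) y :=
      (((hGiSmooth i).differentiable (by simp)) (Pl m s i y)).hasFDerivAt.comp y
        (Pl m s i).hasFDerivAt
    rw [pd]
    conv_lhs => rw [hcomp]
    rw [h1.fderiv]
    rfl

  -- smoothness of partial derivatives
  have hpdsmooth : ∀ b : Fin (3 * m + s), ContDiff ℝ (⊤ : ℕ∞) (fun y => pd b G y) := by
    intro b
    show ContDiff ℝ (⊤ : ℕ∞) (fun y => fderiv ℝ G y (Pi.single b 1))
    exact (hGsmooth.fderiv_right (by simp)).clm_apply contDiff_const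
  -- sum rule
  have hpdG : ∀ (e : Fin (3 * m + s)) (y), pd e G y = ∑ j, pd e (Gi j) y := by
    intro e y
    rw [hG, pd, fderiv_fun_sum fun j _ => ((hGiSmooth j).differentiable (by simp)).differentiableAt]
    rw [ContinuousLinearMap.sum_apply]
    rfl
  -- block structure of first derivatives: for e < 3m, only block (e % m) matters
  have hblock : ∀ (e : Fin (3 * m + s)) (he : e.val < 3 * m),
      (fun y => pd e G y) = fun y =>
        fderiv ℝ (Gi ⟨e.val % m, Nat.mod_lt _ (by omega)⟩)
          (Pl m s ⟨e.val % m, Nat.mod_lt _ (by omega)⟩ y) (Pi.single e 1) := by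
    intro e he
    funext y
    set ie : Fin m := ⟨e.val % m, Nat.mod_lt _ (by omega)⟩ with hie
    rw [hpdG e y]
    rw [Finset.sum_eq_single ie]
    · rw [hpdGi ie e y, Pl_single, if_pos (Or.inl ⟨he, rfl⟩)]
    · intro j _ hj
      rw [hpdGi j e y, Pl_single, if_neg, map_zero]
      push_neg
      refine ⟨fun _ hmod => hj ?_, by omega⟩
      exact Fin.ext (by rw [← hmod])
    · intro hmem
      exact absurd (Finset.mem_univ ie) hmem
  -- cross-block second derivatives vanish
  have hcross : ∀ (x : Fin (3 * m + s) → ℝ) (μ e : Fin (3 * m + s)),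
      μ.val < 3 * m → e.val < 3 * m → μ.val % m ≠ e.val % m →
      pd μ (fun y => pd e G y) x = 0 := by
    intro x μ e hμ he hne
    set ie : Fin m := ⟨e.val % m, Nat.mod_lt _ (by omega)⟩ with hie
    set q : (Fin (3 * m + s) → ℝ) → ℝ := fun z => fderiv ℝ (Gi ie) z (Pi.single e 1) with hq
    have hqsmooth : ContDiff ℝ (⊤ : ℕ∞) q :=
      ((hGiSmooth ie).fderiv_right (by simp)).clm_apply contDiff_const
    have h2 : (fun y => pd e G y) = fun y => q (Pl m s ie y) := hblock e he
    rw [pd]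
    conv_lhs => rw [h2]
    have h3 : HasFDerivAt (fun y => q (Pl m s ie y))
        ((fderiv ℝ q (Pl m s ie x)).comp (Pl m s ie)) x :=
      ((hqsmooth.differentiable (by simp)) (Pl m s ie x)).hasFDerivAt.comp x
        (Pl m s ie).hasFDerivAt
    rw [h3.fderiv]
    show fderiv ℝ q (Pl m s ie x) (Pl m s ie (Pi.single μ 1)) = 0
    rw [Pl_single, if_neg, map_zero]
    push_neg
    exact ⟨fun _ hmod => hne (by rw [hmod]), by omega⟩
  -- symmetry of second derivatives
  have hsym : ∀ (x : Fin (3 * m + s) → ℝ) (μ e : Fin (3 * m + s)),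
      pd μ (fun y => pd e G y) x = pd e (fun y => pd μ G y) x := by
    intro x μ e
    have hd : ∀ y, HasFDerivAt G (fderiv ℝ G y) y := fun y =>
      ((hGsmooth.differentiable (by simp)) y).hasFDerivAt
    have hd2 : HasFDerivAt (fderiv ℝ G) (fderiv ℝ (fderiv ℝ G) x) x :=
      (((hGsmooth.fderiv_right (m := (⊤ : ℕ∞)) (by simp)).differentiable (by simp)) x).hasFDerivAt
    have key2 : ∀ v w : Fin (3 * m + s) → ℝ,
        fderiv ℝ (fun y => fderiv ℝ G y v) x w = fderiv ℝ (fderiv ℝ G) x w v := by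
      intro v w
      have h4 : HasFDerivAt (fun y => fderiv ℝ G y v)
          ((ContinuousLinearMap.apply ℝ ℝ v).comp (fderiv ℝ (fderiv ℝ G) x)) x :=
        (ContinuousLinearMap.apply ℝ ℝ v).hasFDerivAt.comp x hd2
      rw [h4.fderiv]
      rfl
    show fderiv ℝ (fun y => fderiv ℝ G y (Pi.single e 1)) x (Pi.single μ 1)
      = fderiv ℝ (fun y => fderiv ℝ G y (Pi.single μ 1)) x (Pi.single e 1)
    rw [key2, key2]
    exact second_derivative_symmetric hd hd2 _ _
  -- linearity of pd over the Egen-weighted sums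
  have hpd_inner : ∀ (C D μ : Fin (3 * m + s)) (x : Fin (3 * m + s) → ℝ),
      pd μ (fun y => ∑ b, Egen m s C b D * pd b G y) x
        = ∑ e, Egen m s C e D * pd μ (fun y => pd e G y) x := by
    intro C D μ x
    rw [pd, fderiv_fun_sum fun j _ =>
      (((hpdsmooth j).differentiable (by simp)) x).const_mul _]
    rw [ContinuousLinearMap.sum_apply]
    refine Finset.sum_congr rfl fun e _ => ?_
    rw [fderiv_const_mul (((hpdsmooth e).differentiable (by simp)) x)]
    rfl
  intro x a c d
  simp only [hpd_inner]
  by_cases hv : a.val < 3 * m ∧ c.val < 3 * m ∧ d.val < 3 * m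
      ∧ a.val % m = c.val % m ∧ c.val % m = d.val % m
  · -- all three indices in the same block
    obtain ⟨ha3, hc3, hd3, hac, hcd⟩ := hv
    have him : (0:ℕ) < m := by omega
    set i : Fin m := ⟨a.val % m, Nat.mod_lt _ him⟩ with hidef
    have hilt : i.val < m := i.isLt
    set emb : Fin 3 → Fin (3 * m + s) :=
      fun l => ⟨m * l.val + i.val, lt_of_lt_of_le (idx_lt l i) (by omega)⟩ with hembdef
    have hembval : ∀ l, (emb l).val = m * l.val + i.val := fun l => rfl
    have hinj : Function.Injective emb := by
      intro l l' h
      have h2 := congrArg Fin.val h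
      rw [hembval, hembval] at h2
      have h3 : m * l.val = m * l'.val := by omega
      exact Fin.ext (Nat.eq_of_mul_eq_mul_left him h3)
    have hmem : ∀ μ : Fin (3 * m + s), μ.val < 3 * m → μ.val % m = a.val % m →
        ∃ l, μ = emb l := by
      intro μ h1 h2
      refine ⟨⟨μ.val / m, (Nat.div_lt_iff_lt_mul him).mpr h1⟩, Fin.ext ?_⟩
      rw [hembval]
      show μ.val = m * (μ.val / m) + a.val % m
      rw [← h2]
      exact (Nat.div_add_mod μ.val m).symm
    have hr : ∀ l : Fin 3, (emb l).val % m = a.val % m := by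
      intro l
      rw [hembval, nmod_helper _ _ hilt]
    obtain ⟨la, hla⟩ := hmem a ha3 rfl
    obtain ⟨lc, hlc⟩ := hmem c hc3 hac.symm
    obtain ⟨ld, hld⟩ := hmem d hd3 (hac.trans hcd).symm
    rw [hla, hlc, hld]
    have hfac : ∀ (A μ : Fin (3 * m + s)), (∀ l, μ ≠ emb l) →
        A.val % m = a.val % m → (∑ b, Egen m s A b μ * pd b G x) = 0 := by
      intro A μ hl hA
      refine Finset.sum_eq_zero fun b _ => ?_
      by_cases hE : Egen m s A b μ = 0
      · rw [hE, zero_mul]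
      · obtain ⟨hA3, hb3, hμ3, h4, h5⟩ := Egen_support hE
        obtain ⟨l, hl2⟩ := hmem μ hμ3 (by rw [← h5, ← h4, hA])
        exact absurd hl2 (hl l)
    have hinner : ∀ (A μ' : Fin (3 * m + s)) (F : Fin (3 * m + s) → ℝ),
        A.val % m = a.val % m →
        (∑ b, Egen m s A b μ' * F b) = ∑ lb, Egen m s A (emb lb) μ' * F (emb lb) := by
      intro A μ' F hA
      refine sum_reduce emb hinj _ fun b hbl => ?_
      by_cases hE : Egen m s A b μ' = 0
      · rw [hE, zero_mul]
      · obtain ⟨hA3, hb3, hμ3, h4, h5⟩ := Egen_support hE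
        obtain ⟨l, hl2⟩ := hmem b hb3 (by rw [← h4, hA])
        exact absurd hl2 (hbl l)
    have hE3 : ∀ l1 l2 l3 : Fin 3, Egen m s (emb l1) (emb l2) (emb l3) = eps l1 l2 l3 :=
      fun l1 l2 l3 => Egen_eq_eps (hembval l1) (hembval l2) (hembval l3)
    have houter : ∀ μ : Fin (3 * m + s), (∀ l, μ ≠ emb l) →
        ((∑ b, Egen m s (emb la) b μ * pd b G x)
            * (∑ e, Egen m s (emb lc) e (emb ld) * pd μ (fun y => pd e G y) x)
          + (∑ b, Egen m s (emb lc) b μ * pd b G x)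
            * (∑ e, Egen m s (emb ld) e (emb la) * pd μ (fun y => pd e G y) x)
          + (∑ b, Egen m s (emb ld) b μ * pd b G x)
            * (∑ e, Egen m s (emb la) e (emb lc) * pd μ (fun y => pd e G y) x)) = 0 := by
      intro μ hl
      rw [hfac (emb la) μ hl (hr la), hfac (emb lc) μ hl (hr lc), hfac (emb ld) μ hl (hr ld)]
      ring
    rw [sum_reduce emb hinj _ houter]
    refine Eq.trans (Finset.sum_congr rfl fun lμ _ => ?_)
      (key (fun l => pd (emb l) G x)
        (fun l l' => pd (emb l) (fun y => pd (emb l') G y) x)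
        (hsym x _ _) (hsym x _ _) (hsym x _ _) la lc ld)
    rw [hinner (emb la) (emb lμ) (fun b => pd b G x) (hr la),
        hinner (emb lc) (emb lμ) (fun b => pd b G x) (hr lc),
        hinner (emb ld) (emb lμ) (fun b => pd b G x) (hr ld),
        hinner (emb lc) (emb ld) (fun e => pd (emb lμ) (fun y => pd e G y) x) (hr lc),
        hinner (emb ld) (emb la) (fun e => pd (emb lμ) (fun y => pd e G y) x) (hr ld),
        hinner (emb la) (emb lc) (fun e => pd (emb lμ) (fun y => pd e G y) x) (hr la)]
    simp only [hE3]
  · -- the indices are not all in a common block: every term vanishes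
    have termz : ∀ A C D : Fin (3 * m + s),
        ¬(A.val < 3 * m ∧ C.val < 3 * m ∧ D.val < 3 * m
          ∧ A.val % m = C.val % m ∧ C.val % m = D.val % m) →
        ∀ μ : Fin (3 * m + s),
        (∑ b, Egen m s A b μ * pd b G x)
          * (∑ e, Egen m s C e D * pd μ (fun y => pd e G y) x) = 0 := by
      intro A C D hn μ
      by_cases h1 : C.val < 3 * m ∧ D.val < 3 * m ∧ C.val % m = D.val % m
      · by_cases h2 : A.val < 3 * m ∧ A.val % m = μ.val % m ∧ μ.val < 3 * m
        · have hAC : A.val % m ≠ C.val % m := fun hEq => hn ⟨h2.1, h1.1, h1.2.1, hEq, h1.2.2⟩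
          have hz : (∑ e, Egen m s C e D * pd μ (fun y => pd e G y) x) = 0 := by
            refine Finset.sum_eq_zero fun e _ => ?_
            by_cases hE : Egen m s C e D = 0
            · rw [hE, zero_mul]
            · obtain ⟨_, he3, _, hce, _⟩ := Egen_support hE
              rw [hcross x μ e h2.2.2 he3 (by rw [← hce, ← h2.2.1]; exact hAC), mul_zero]
          rw [hz, mul_zero]
        · have hz : (∑ b, Egen m s A b μ * pd b G x) = 0 := by
            refine Finset.sum_eq_zero fun b _ => ?_
            by_cases hE : Egen m s A b μ = 0
            · rw [hE, zero_mul]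
            · obtain ⟨hA3, _, hμ3, hab, hbμ⟩ := Egen_support hE
              exact absurd ⟨hA3, hab.trans hbμ, hμ3⟩ h2
          rw [hz, zero_mul]
      · have hz : (∑ e, Egen m s C e D * pd μ (fun y => pd e G y) x) = 0 := by
          refine Finset.sum_eq_zero fun e _ => ?_
          by_cases hE : Egen m s C e D = 0
          · rw [hE, zero_mul]
          · obtain ⟨hC3, _, hD3, hce, hed⟩ := Egen_support hE
            exact absurd ⟨hC3, hD3, hce.trans hed⟩ h1
        rw [hz, mul_zero]
    refine Finset.sum_eq_zero fun μ _ => ?_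
    rw [termz a c d hv μ,
      termz c d a (fun h => hv ⟨h.2.2.1, h.1, h.2.1,
        (h.2.2.2.1.trans h.2.2.2.2).symm, h.2.2.2.1⟩) μ,
      termz d a c (fun h => hv ⟨h.2.1, h.2.2.1, h.1, h.2.2.2.2,
        h.2.2.2.2.symm.trans h.2.2.2.1.symm⟩) μ]
    ring
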